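/- Let f : U → X be a G-equivariant closed immersion of k-schemes. Then the induced morphism Fix_G(f) : Fix_G(U) → Fix_G(X) is a closed immersion. -/

import Mathlib

/-! Since `f` is a monomorphism, the square formed by `f`, `f ×ₖ f` and the diagonals of `U` and
`X` is cartesian. Pasting it with the defining square of `Fix_G(U)` and using equivariance
shows that `Fix_G(f)` is the base change of `id_G ×ₖ f` along `Fix_G(X) → G ×ₖ X`. As
`id_G ×ₖ f` is itself a base change of `f`, both are closed immersions. -/

open CategoryTheory CategoryTheory.Limits AlgebraicGeometry

noncomputable section
namespace Paper
universe u
variable (k : CommRingCat.{u})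
variable {G X U : Scheme.{u}}

/-- The morphism `(m, pr₂) : G ×ₖ X ⟶ X ×ₖ X`. -/
def actionPair (sG : G ⟶ Spec k) (sX : X ⟶ Spec k) (m : pullback sG sX ⟶ X)
    (hm : m ≫ sX = pullback.snd sG sX ≫ sX) : pullback sG sX ⟶ pullback sX sX :=
  pullback.lift m (pullback.snd sG sX) hm

/-- The fixed-point scheme `Fix_G(X)`. -/
def Fix (sG : G ⟶ Spec k) (sX : X ⟶ Spec k) (m : pullback sG sX ⟶ X)
    (hm : m ≫ sX = pullback.snd sG sX ≫ sX) : Scheme :=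
  pullback (actionPair k sG sX m hm) (pullback.diagonal sX)

/-- The canonical projection `Fix_G(X) ⟶ G ×ₖ X`. -/
def fixToProd (sG : G ⟶ Spec k) (sX : X ⟶ Spec k) (m : pullback sG sX ⟶ X)
    (hm : m ≫ sX = pullback.snd sG sX ≫ sX) :
    Fix k sG sX m hm ⟶ pullback sG sX :=
  pullback.fst (actionPair k sG sX m hm) (pullback.diagonal sX)

/-- The canonical projection `Fix_G(X) ⟶ X`. -/
def fixToBase (sG : G ⟶ Spec k) (sX : X ⟶ Spec k) (m : pullback sG sX ⟶ X)
    (hm : m ≫ sX = pullback.snd sG sX ≫ sX) :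
    Fix k sG sX m hm ⟶ X :=
  pullback.snd (actionPair k sG sX m hm) (pullback.diagonal sX)

/-- `id_G ×ₖ f : G ×ₖ U ⟶ G ×ₖ X`. -/
def prodMap (sG : G ⟶ Spec k) (sU : U ⟶ Spec k) (sX : X ⟶ Spec k)
    (f : U ⟶ X) (hf : f ≫ sX = sU) : pullback sG sU ⟶ pullback sG sX :=
  pullback.map sG sU sG sX (𝟙 G) f (𝟙 (Spec k)) (by simp) (by simp [hf])

theorem fixMap_w (sG : G ⟶ Spec k) (sU : U ⟶ Spec k) (sX : X ⟶ Spec k)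
    (mU : pullback sG sU ⟶ U) (hmU : mU ≫ sU = pullback.snd sG sU ≫ sU)
    (mX : pullback sG sX ⟶ X) (hmX : mX ≫ sX = pullback.snd sG sX ≫ sX)
    (f : U ⟶ X) (hf : f ≫ sX = sU)
    (heq : prodMap k sG sU sX f hf ≫ mX = mU ≫ f) :
    (fixToProd k sG sU mU hmU ≫ prodMap k sG sU sX f hf) ≫ actionPair k sG sX mX hmX
      = (fixToBase k sG sU mU hmU ≫ f) ≫ pullback.diagonal sX := by
  have h1 : fixToProd k sG sU mU hmU ≫ mU = fixToBase k sG sU mU hmU := by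
    have hc : fixToProd k sG sU mU hmU ≫ actionPair k sG sU mU hmU
        = fixToBase k sG sU mU hmU ≫ pullback.diagonal sU := pullback.condition
    have := congrArg (· ≫ pullback.fst sU sU) hc
    simpa [actionPair, Category.assoc, pullback.lift_fst_assoc, pullback.lift_fst] using this
  have h2 : fixToProd k sG sU mU hmU ≫ pullback.snd sG sU = fixToBase k sG sU mU hmU := by
    have hc : fixToProd k sG sU mU hmU ≫ actionPair k sG sU mU hmU
        = fixToBase k sG sU mU hmU ≫ pullback.diagonal sU := pullback.condition
    have := congrArg (· ≫ pullback.snd sU sU) hc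
    simpa [actionPair, Category.assoc, pullback.lift_snd_assoc, pullback.lift_snd] using this
  apply pullback.hom_ext
  · simp only [Category.assoc, actionPair, pullback.lift_fst, pullback.diagonal_fst,
      Category.comp_id]
    rw [heq, ← Category.assoc, h1]
  · simp only [Category.assoc, actionPair, pullback.lift_snd, pullback.diagonal_snd,
      Category.comp_id]
    rw [show prodMap k sG sU sX f hf ≫ pullback.snd sG sX = pullback.snd sG sU ≫ f from by
      simp [prodMap, pullback.map, pullback.lift_snd]]
    rw [← Category.assoc, h2]

/-- The induced morphism `Fix_G(f) : Fix_G(U) ⟶ Fix_G(X)`. -/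
def fixMap (sG : G ⟶ Spec k) (sU : U ⟶ Spec k) (sX : X ⟶ Spec k)
    (mU : pullback sG sU ⟶ U) (hmU : mU ≫ sU = pullback.snd sG sU ≫ sU)
    (mX : pullback sG sX ⟶ X) (hmX : mX ≫ sX = pullback.snd sG sX ≫ sX)
    (f : U ⟶ X) (hf : f ≫ sX = sU)
    (heq : prodMap k sG sU sX f hf ≫ mX = mU ≫ f) :
    Fix k sG sU mU hmU ⟶ Fix k sG sX mX hmX :=
  pullback.lift (fixToProd k sG sU mU hmU ≫ prodMap k sG sU sX f hf)
    (fixToBase k sG sU mU hmU ≫ f)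
    (fixMap_w k sG sU sX mU hmU mX hmX f hf heq)

theorem isPullback_diagonal_of_mono {C : Type*} [Category C] {S Y Z : C}
    (sY : Y ⟶ S) (sZ : Z ⟶ S) (f : Y ⟶ Z) (hf : f ≫ sZ = sY) [Mono f]
    [HasPullback sY sY] [HasPullback sZ sZ] :
    IsPullback f (pullback.diagonal sY) (pullback.diagonal sZ)
      (pullback.map sY sY sZ sZ f f (𝟙 S) (by simp [hf]) (by simp [hf])) := by
  have map_fst : pullback.map sY sY sZ sZ f f (𝟙 S) (by simp [hf]) (by simp [hf]) ≫
      pullback.fst sZ sZ = pullback.fst sY sY ≫ f := pullback.lift_fst _ _ _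
  have map_snd : pullback.map sY sY sZ sZ f f (𝟙 S) (by simp [hf]) (by simp [hf]) ≫
      pullback.snd sZ sZ = pullback.snd sY sY ≫ f := pullback.lift_snd _ _ _
  have fst_comp : ∀ c : PullbackCone (pullback.diagonal sZ)
      (pullback.map sY sY sZ sZ f f (𝟙 S) (by simp [hf]) (by simp [hf])),
      (c.snd ≫ pullback.fst sY sY) ≫ f = c.fst := fun c => by
    simpa [map_fst] using congrArg (· ≫ pullback.fst sZ sZ) c.condition.symm
  have snd_comp : ∀ c : PullbackCone (pullback.diagonal sZ)
      (pullback.map sY sY sZ sZ f f (𝟙 S) (by simp [hf]) (by simp [hf])),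
      (c.snd ≫ pullback.snd sY sY) ≫ f = c.fst := fun c => by
    simpa [map_snd] using congrArg (· ≫ pullback.snd sZ sZ) c.condition.symm
  refine ⟨⟨by ext <;> simp [map_fst, map_snd]⟩, ⟨PullbackCone.IsLimit.mk _
    (fun c => c.snd ≫ pullback.fst sY sY) fst_comp (fun c => ?_)
    (fun c m _ hm => by simp [← hm])⟩⟩
  have fst_eq_snd : c.snd ≫ pullback.fst sY sY = c.snd ≫ pullback.snd sY sY := by
    rw [← cancel_mono f, fst_comp, snd_comp]
  ext <;> simp [fst_eq_snd]

section

variable (sG : G ⟶ Spec k) (sU : U ⟶ Spec k) (sX : X ⟶ Spec k)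
  (mU : pullback sG sU ⟶ U) (hmU : mU ≫ sU = pullback.snd sG sU ≫ sU)
  (mX : pullback sG sX ⟶ X) (hmX : mX ≫ sX = pullback.snd sG sX ≫ sX)
  (f : U ⟶ X) (hf : f ≫ sX = sU)

theorem prodMap_fst : prodMap k sG sU sX f hf ≫ pullback.fst sG sX = pullback.fst sG sU := by
  simp [prodMap, pullback.lift_fst]

theorem prodMap_snd :
    prodMap k sG sU sX f hf ≫ pullback.snd sG sX = pullback.snd sG sU ≫ f := by
  simp [prodMap, pullback.lift_snd]

theorem isPullback_prodMap :
    IsPullback (pullback.snd sG sU) (prodMap k sG sU sX f hf) f (pullback.snd sG sX) := by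
  refine .of_bot ?_ (prodMap_snd k sG sU sX f hf).symm (IsPullback.of_hasPullback sG sX).flip
  rw [prodMap_fst, hf]
  exact (IsPullback.of_hasPullback sG sU).flip

theorem prodMap_actionPair (heq : prodMap k sG sU sX f hf ≫ mX = mU ≫ f) :
    prodMap k sG sU sX f hf ≫ actionPair k sG sX mX hmX =
      actionPair k sG sU mU hmU ≫
        pullback.map sU sU sX sX f f (𝟙 _) (by simp [hf]) (by simp [hf]) := by
  apply pullback.hom_ext
  · rw [Category.assoc, actionPair, pullback.lift_fst, heq, Category.assoc, pullback.lift_fst,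
      actionPair, pullback.lift_fst_assoc]
  · rw [Category.assoc, actionPair, pullback.lift_snd, prodMap_snd, Category.assoc,
      pullback.lift_snd, actionPair, pullback.lift_snd_assoc]

theorem isPullback_fix :
    IsPullback (fixToProd k sG sX mX hmX) (fixToBase k sG sX mX hmX)
      (actionPair k sG sX mX hmX) (pullback.diagonal sX) :=
  IsPullback.of_hasPullback _ _

variable (heq : prodMap k sG sU sX f hf ≫ mX = mU ≫ f)

theorem fixMap_fixToProd :
    fixMap k sG sU sX mU hmU mX hmX f hf heq ≫ fixToProd k sG sX mX hmX =
      fixToProd k sG sU mU hmU ≫ prodMap k sG sU sX f hf :=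
  pullback.lift_fst _ _ _

theorem fixMap_fixToBase :
    fixMap k sG sU sX mU hmU mX hmX f hf heq ≫ fixToBase k sG sX mX hmX =
      fixToBase k sG sU mU hmU ≫ f :=
  pullback.lift_snd _ _ _

theorem isPullback_fixMap [Mono f] :
    IsPullback (fixToProd k sG sU mU hmU) (fixMap k sG sU sX mU hmU mX hmX f hf heq)
      (prodMap k sG sU sX f hf) (fixToProd k sG sX mX hmX) := by
  refine (IsPullback.of_right ?_ (fixMap_fixToProd k sG sU sX mU hmU mX hmX f hf heq)
    (isPullback_fix k sG sX mX hmX).flip).flip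
  rw [fixMap_fixToBase, prodMap_actionPair k sG sU sX mU hmU mX hmX f hf heq]
  exact (isPullback_fix k sG sU mU hmU).flip.paste_horiz (isPullback_diagonal_of_mono sU sX f hf)

end

/-- If `f : U ⟶ X` is a `G`-equivariant closed immersion of `k`-schemes, then
the induced morphism `Fix_G(f) : Fix_G(U) ⟶ Fix_G(X)` is a closed immersion. -/
theorem statement2 (sG : G ⟶ Spec k) (sU : U ⟶ Spec k) (sX : X ⟶ Spec k)
    (mU : pullback sG sU ⟶ U) (hmU : mU ≫ sU = pullback.snd sG sU ≫ sU)
    (mX : pullback sG sX ⟶ X) (hmX : mX ≫ sX = pullback.snd sG sX ≫ sX)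
    (f : U ⟶ X) (hf : f ≫ sX = sU)
    (heq : prodMap k sG sU sX f hf ≫ mX = mU ≫ f)
    [IsClosedImmersion f] :
    IsClosedImmersion (fixMap k sG sU sX mU hmU mX hmX f hf heq) := by
  have : IsClosedImmersion (prodMap k sG sU sX f hf) :=
    MorphismProperty.of_isPullback (isPullback_prodMap k sG sU sX f hf) ‹_›
  exact MorphismProperty.of_isPullback (isPullback_fixMap k sG sU sX mU hmU mX hmX f hf heq) this

end Paper
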